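/- arXiv:2603.02393 — 2 statements merged into one kernel-verified Lean document; each statement's English description precedes it below -/
import Mathlib

section
/- Volume of the order polytope via linear extensions: let n ≥ 1, let ⪯ be a partial order on Fin n, and let t ≥ 0. Let e(⪯) denote the number of permutations σ of Fin n such that i ⪯ j implies σ(i) ≤ σ(j), where ≤ is the standard linear order on Fin n. Then the Lebesgue measure of the set { x ∈ ℝ^n : 0 ≤ x_i ≤ t for all i, and x_i ≤ x_j whenever i ⪯ j } equals e(⪯) · t^n / n!. -/
open MeasureTheory Set
open scoped ENNReal

namespace OrderPolytopeAux

/-- The "chain simplex" of a permutation inside the cube `[0,t]^n`. -/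
def T (n : ℕ) (t : ℝ) (σ : Equiv.Perm (Fin n)) : Set (Fin n → ℝ) :=
  {x | (∀ i, x i ∈ Set.Icc 0 t) ∧ ∀ i j, σ i ≤ σ j → x i ≤ x j}

lemma measurableSet_T (n : ℕ) (t : ℝ) (σ : Equiv.Perm (Fin n)) :
    MeasurableSet (T n t σ) := by
  have h1 : MeasurableSet {x : Fin n → ℝ | ∀ i, x i ∈ Set.Icc 0 t} := by
    have : {x : Fin n → ℝ | ∀ i, x i ∈ Set.Icc 0 t}
        = ⋂ i, (fun x : Fin n → ℝ => x i) ⁻¹' Set.Icc 0 t := by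
      ext x; simp
    rw [this]
    exact MeasurableSet.iInter fun i => (measurable_pi_apply i) measurableSet_Icc
  have h2 : MeasurableSet {x : Fin n → ℝ | ∀ i j, σ i ≤ σ j → x i ≤ x j} := by
    have : {x : Fin n → ℝ | ∀ i j, σ i ≤ σ j → x i ≤ x j}
        = ⋂ i, ⋂ j, {x : Fin n → ℝ | σ i ≤ σ j → x i ≤ x j} := by
      ext x; simp
    rw [this]
    refine MeasurableSet.iInter fun i => MeasurableSet.iInter fun j => ?_
    by_cases h : σ i ≤ σ j
    · simp only [h, forall_true_left]
      exact measurableSet_le (measurable_pi_apply i) (measurable_pi_apply j)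
    · simp only [h, false_implies, setOf_true]
      exact MeasurableSet.univ
  have : T n t σ = {x : Fin n → ℝ | ∀ i, x i ∈ Set.Icc 0 t}
      ∩ {x : Fin n → ℝ | ∀ i j, σ i ≤ σ j → x i ≤ x j} := rfl
  rw [this]; exact h1.inter h2

/-- A hyperplane `{x i = x j}` (`i ≠ j`) is null. -/
lemma null_pair (n : ℕ) (i j : Fin n) (hij : i ≠ j) :
    volume {x : Fin n → ℝ | x i = x j} = 0 := by
  have heq : {x : Fin n → ℝ | x i = x j}
      = (LinearMap.ker ((LinearMap.proj i : (Fin n → ℝ) →ₗ[ℝ] ℝ) - LinearMap.proj j) : Set _) := by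
    ext x
    simp [LinearMap.mem_ker, sub_eq_zero]
  rw [heq]
  apply Measure.addHaar_submodule
  intro h
  have h1 : (Pi.single i 1 : Fin n → ℝ) ∈ LinearMap.ker
      ((LinearMap.proj i : (Fin n → ℝ) →ₗ[ℝ] ℝ) - LinearMap.proj j) := h ▸ Submodule.mem_top
  simp [LinearMap.mem_ker, Pi.single_apply, hij.symm, sub_eq_zero] at h1

/-- The union of all hyperplanes. -/
def N (n : ℕ) : Set (Fin n → ℝ) := ⋃ i, ⋃ j, {x : Fin n → ℝ | i ≠ j ∧ x i = x j}

lemma null_N (n : ℕ) : volume (N n) = 0 := by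
  refine measure_iUnion_null fun i => measure_iUnion_null fun j => ?_
  by_cases hij : i = j
  · simp [hij]
  · refine measure_mono_null (fun x hx => hx.2) (null_pair n i j hij)

/-- If `x ∈ T σ ∩ T τ` has pairwise distinct coordinates then `σ = τ`. -/
lemma eq_of_mem_inter {n : ℕ} {t : ℝ} {σ τ : Equiv.Perm (Fin n)} {x : Fin n → ℝ}
    (hσ : x ∈ T n t σ) (hτ : x ∈ T n t τ) (hx : x ∉ N n) : σ = τ := by
  have hdist : ∀ i j : Fin n, i ≠ j → x i ≠ x j := by
    intro i j h he
    exact hx (Set.mem_iUnion.2 ⟨i, Set.mem_iUnion.2 ⟨j, ⟨h, he⟩⟩⟩)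
  have key : ∀ ρ ψ : Equiv.Perm (Fin n), x ∈ T n t ρ → x ∈ T n t ψ →
      ∀ i j : Fin n, ρ i ≤ ρ j → ψ i ≤ ψ j := by
    intro ρ ψ hρ hψ i j h
    rcases eq_or_ne i j with rfl | hij
    · exact le_refl _
    by_contra hc
    have h1 : x i ≤ x j := hρ.2 i j h
    have h2 : x j ≤ x i := hψ.2 j i (le_of_not_ge hc)
    exact hdist i j hij (le_antisymm h1 h2)
  have h1 : Monotone fun a => (τ.symm.trans σ) a := by
    intro a b hab
    exact key τ σ hτ hσ _ _ (by simpa using hab)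
  have h2 : Monotone fun a => (τ.symm.trans σ).symm a := by
    intro a b hab
    exact key σ τ hσ hτ _ _ (by simpa using hab)
  have he : (τ.symm.trans σ).toOrderIso h1 h2 = OrderIso.refl (Fin n) :=
    Subsingleton.elim _ _
  have hid : ∀ a, σ (τ.symm a) = a := by
    intro a
    have h := congrArg (fun g : Fin n ≃o Fin n => g a) he
    simpa [Equiv.coe_toOrderIso] using h
  refine Equiv.ext fun a => ?_
  have := hid (τ a)
  simpa using this

lemma aedisjoint_T (n : ℕ) (t : ℝ) {σ τ : Equiv.Perm (Fin n)} (h : σ ≠ τ) :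
    volume (T n t σ ∩ T n t τ) = 0 := by
  refine measure_mono_null ?_ (null_N n)
  intro x hx
  by_contra hN
  exact h (eq_of_mem_inter hx.1 hx.2 hN)

/-- All chain simplices have the same volume, by permutation symmetry. -/
lemma volume_T_eq (n : ℕ) (t : ℝ) (σ : Equiv.Perm (Fin n)) :
    volume (T n t σ) = volume (T n t 1) := by
  have hmp := MeasureTheory.volume_measurePreserving_piCongrLeft (fun _ : Fin n => ℝ)
    (σ : Fin n ≃ Fin n)
  rw [← hmp.measure_preimage (measurableSet_T n t 1).nullMeasurableSet]
  congr 1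
  ext x
  set e := MeasurableEquiv.piCongrLeft (fun _ : Fin n => ℝ) (σ : Fin n ≃ Fin n) with he
  have hy : ∀ i, e x (σ i) = x i := by
    intro i
    simp [he, MeasurableEquiv.piCongrLeft]
  simp only [Set.mem_preimage]
  constructor
  · rintro ⟨hIcc, hmono⟩
    refine ⟨fun k => ?_, fun k l hkl => ?_⟩
    · have h := hy (σ.symm k)
      rw [Equiv.apply_symm_apply] at h
      rw [h]; exact hIcc _
    · have hk := hy (σ.symm k)
      rw [Equiv.apply_symm_apply] at hk
      have hl := hy (σ.symm l)
      rw [Equiv.apply_symm_apply] at hl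
      rw [hk, hl]
      refine hmono _ _ ?_
      simpa using hkl
  · rintro ⟨hIcc, hmono⟩
    refine ⟨fun i => ?_, fun i j hij => ?_⟩
    · rw [← hy i]; exact hIcc _
    · rw [← hy i, ← hy j]
      refine hmono _ _ ?_
      simpa using hij

/-- The cube is exactly the union of all chain simplices. -/
lemma cube_eq_union (n : ℕ) (t : ℝ) :
    {x : Fin n → ℝ | ∀ i, x i ∈ Set.Icc 0 t} = ⋃ σ : Equiv.Perm (Fin n), T n t σ := by
  ext x
  simp only [Set.mem_iUnion, Set.mem_setOf_eq]
  constructor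
  · intro hx
    refine ⟨(Tuple.sort x)⁻¹, hx, fun i j hij => ?_⟩
    have hm := Tuple.monotone_sort x
    have := hm (a := (Tuple.sort x)⁻¹ i) (b := (Tuple.sort x)⁻¹ j) hij
    simpa using this
  · rintro ⟨σ, hσ⟩
    exact hσ.1

/-- Volume of a single chain simplex. -/
lemma volume_T_one (n : ℕ) (t : ℝ) (ht : 0 ≤ t) :
    volume (T n t 1) = ENNReal.ofReal (t ^ n) / (Nat.factorial n : ℝ≥0∞) := by
  have hcube : volume {x : Fin n → ℝ | ∀ i, x i ∈ Set.Icc 0 t} = ENNReal.ofReal (t ^ n) := by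
    have : {x : Fin n → ℝ | ∀ i, x i ∈ Set.Icc 0 t}
        = Set.pi Set.univ (fun _ : Fin n => Set.Icc 0 t) := by
      ext x; simp [Set.mem_Icc, Pi.le_def, forall_and]
    rw [this, volume_pi_pi]
    simp [Real.volume_Icc, ← ENNReal.ofReal_pow ht]
  have hsum : volume {x : Fin n → ℝ | ∀ i, x i ∈ Set.Icc 0 t}
      = (Nat.factorial n : ℝ≥0∞) * volume (T n t 1) := by
    rw [cube_eq_union n t]
    rw [measure_iUnion₀ ?_ (fun σ => (measurableSet_T n t σ).nullMeasurableSet)]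
    · rw [tsum_fintype]
      have : ∀ σ : Equiv.Perm (Fin n), volume (T n t σ) = volume (T n t 1) :=
        volume_T_eq n t
      rw [Finset.sum_congr rfl (fun σ _ => this σ), Finset.sum_const, Finset.card_univ,
        Fintype.card_perm, Fintype.card_fin, nsmul_eq_mul]
    · intro σ τ hστ
      exact aedisjoint_T n t hστ
  rw [ENNReal.eq_div_iff (by simp [Nat.factorial_ne_zero]) (by simp)]
  rw [← hsum, hcube]

end OrderPolytopeAux

/-- **Volume of the order polytope via linear extensions**: for a partial order `⪯` on
`Fin n` (`n ≥ 1`) and `t ≥ 0`, the Lebesgue measure of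
`{x : Fin n → ℝ | 0 ≤ x i ≤ t for all i, and x i ≤ x j whenever i ⪯ j}` equals
`e(⪯) · tⁿ / n!`, where `e(⪯)` is the number of permutations `σ` of `Fin n` such that
`i ⪯ j → σ i ≤ σ j` (with `≤` the standard linear order on `Fin n`). -/
theorem volume_order_polytope (n : ℕ) (hn : 1 ≤ n) (po : PartialOrder (Fin n))
    (t : ℝ) (ht : 0 ≤ t) :
    MeasureTheory.volume
        {x : Fin n → ℝ | (∀ i, x i ∈ Set.Icc 0 t) ∧ ∀ i j, po.le i j → x i ≤ x j}
      = ENNReal.ofReal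
          ((Nat.card {σ : Equiv.Perm (Fin n) // ∀ i j, po.le i j → σ i ≤ σ j} : ℝ)
            * t ^ n / (Nat.factorial n : ℝ)) := by
  classical
  open OrderPolytopeAux in
  set S := {x : Fin n → ℝ | (∀ i, x i ∈ Set.Icc 0 t) ∧ ∀ i j, po.le i j → x i ≤ x j}
  set L : Finset (Equiv.Perm (Fin n)) :=
    Finset.univ.filter (fun σ => ∀ i j, po.le i j → σ i ≤ σ j)
  -- union over linear extensions
  set U : Set (Fin n → ℝ) := ⋃ σ ∈ L, OrderPolytopeAux.T n t σ
  have hUS : U ⊆ S := by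
    rintro x hx
    simp only [U, Set.mem_iUnion] at hx
    obtain ⟨σ, hσL, hIcc, hmono⟩ := hx
    simp only [L, Finset.mem_filter] at hσL
    exact ⟨hIcc, fun i j hij => hmono i j (hσL.2 i j hij)⟩
  have hSU : S \ OrderPolytopeAux.N n ⊆ U := by
    rintro x ⟨⟨hIcc, hpo⟩, hN⟩
    have hdist : ∀ i j : Fin n, i ≠ j → x i ≠ x j := by
      intro i j h he
      exact hN (Set.mem_iUnion.2 ⟨i, Set.mem_iUnion.2 ⟨j, ⟨h, he⟩⟩⟩)
    set σ : Equiv.Perm (Fin n) := (Tuple.sort x)⁻¹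
    have hxT : x ∈ OrderPolytopeAux.T n t σ := by
      refine ⟨hIcc, fun i j hij => ?_⟩
      have hm := Tuple.monotone_sort x
      have := hm (a := (Tuple.sort x)⁻¹ i) (b := (Tuple.sort x)⁻¹ j) hij
      simpa using this
    have hσL : σ ∈ L := by
      simp only [L, Finset.mem_filter, Finset.mem_univ, true_and]
      intro i j hij
      rcases eq_or_ne i j with rfl | hne
      · exact Fin.le_def.mpr (le_refl _)
      by_contra hc
      have h1 : x j ≤ x i := hxT.2 j i (le_of_not_ge hc)
      have h2 : x i ≤ x j := hpo i j hij
      exact hdist i j hne (le_antisymm h2 h1)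
    exact Set.mem_iUnion.2 ⟨σ, Set.mem_iUnion.2 ⟨hσL, hxT⟩⟩
  have hvolU : MeasureTheory.volume U = MeasureTheory.volume S := by
    refine le_antisymm (measure_mono hUS) ?_
    calc MeasureTheory.volume S ≤ MeasureTheory.volume (U ∪ OrderPolytopeAux.N n) := by
          refine measure_mono fun x hx => ?_
          by_cases h : x ∈ OrderPolytopeAux.N n
          · exact Or.inr h
          · exact Or.inl (hSU ⟨hx, h⟩)
      _ ≤ MeasureTheory.volume U + MeasureTheory.volume (OrderPolytopeAux.N n) :=
          measure_union_le _ _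
      _ = MeasureTheory.volume U := by rw [OrderPolytopeAux.null_N n, add_zero]
  have hvolU2 : MeasureTheory.volume U
      = (L.card : ℝ≥0∞) * (ENNReal.ofReal (t ^ n) / (Nat.factorial n : ℝ≥0∞)) := by
    rw [show U = ⋃ σ ∈ L, OrderPolytopeAux.T n t σ from rfl,
      MeasureTheory.measure_biUnion_finset₀
        (fun σ _ τ _ hστ => OrderPolytopeAux.aedisjoint_T n t hστ)
        (fun σ _ => (OrderPolytopeAux.measurableSet_T n t σ).nullMeasurableSet)]
    rw [Finset.sum_congr rfl (fun σ _ => by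
      rw [OrderPolytopeAux.volume_T_eq n t σ, OrderPolytopeAux.volume_T_one n t ht])]
    rw [Finset.sum_const, nsmul_eq_mul]
  have hcard : (Nat.card {σ : Equiv.Perm (Fin n) // ∀ i j, po.le i j → σ i ≤ σ j}) = L.card := by
    rw [Nat.card_eq_fintype_card, Fintype.card_subtype]
  rw [← hvolU, hvolU2, hcard]
  rw [ENNReal.ofReal_div_of_pos (by positivity), ENNReal.ofReal_mul (by positivity),
    ENNReal.ofReal_natCast, ENNReal.ofReal_natCast, mul_div_assoc]
end

section
/- Exponential bound on the ternary Catalan convolution: for every n ∈ ℕ, c_n ≤ (5e)^n, where e is Euler's number (the base of the natural logarithm) and the inequality is between the natural number c_n, viewed as a real number, and the real number (5e)^n. -/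
/-- The ternary Catalan convolution: `c 0 = 1` and
`c (n+1) = ∑_{n₁+n₂+n₃ = n} c n₁ * c n₂ * c n₃`. -/
def cconv : ℕ → ℕ
  | 0 => 1
  | n + 1 =>
    ∑ p ∈ (Finset.HasAntidiagonal.antidiagonal n).attach,
      ∑ q ∈ (Finset.HasAntidiagonal.antidiagonal p.1.2).attach,
        cconv p.1.1 * (cconv q.1.1 * cconv q.1.2)
decreasing_by
  all_goals
    have hp := Finset.HasAntidiagonal.mem_antidiagonal.mp p.2
    try have hq := Finset.HasAntidiagonal.mem_antidiagonal.mp q.2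
    omega

open Finset Nat

lemma catalan_succ_le_four_mul (n : ℕ) : catalan (n + 1) ≤ 4 * catalan n := by
  have h1 := succ_mul_catalan_eq_centralBinom n
  have h2 := succ_mul_catalan_eq_centralBinom (n + 1)
  have h3 := Nat.succ_mul_centralBinom_succ n
  have key : (n + 1) * ((n + 2) * catalan (n + 1)) ≤ (n + 1) * ((n + 2) * (4 * catalan n)) := by
    nlinarith [h1, h2, h3]
  exact Nat.le_of_mul_le_mul_left (Nat.le_of_mul_le_mul_left key (by omega)) (by omega)

lemma catalan_le_four_pow (n : ℕ) : catalan n ≤ 4 ^ n := by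
  induction n with
  | zero => simp
  | succ n ih =>
    calc catalan (n + 1) ≤ 4 * catalan n := catalan_succ_le_four_mul n
    _ ≤ 4 * 4 ^ n := by omega
    _ = 4 ^ (n + 1) := by ring

lemma catalan_conv_ident (n : ℕ) :
    (∑ p ∈ antidiagonal n, catalan p.1 * catalan (p.2 + 1)) + catalan (n + 1)
      = catalan (n + 2) := by
  rw [catalan_succ' (n + 1), Finset.Nat.antidiagonal_succ', Finset.sum_cons]
  simp [Finset.sum_map, mul_comm, add_comm]

lemma cconv_succ (n : ℕ) :
    cconv (n + 1) = ∑ p ∈ antidiagonal n, ∑ q ∈ antidiagonal p.2,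
      cconv p.1 * (cconv q.1 * cconv q.2) := by
  rw [cconv]
  rw [Finset.sum_attach (antidiagonal n)
    (fun p => ∑ q ∈ (antidiagonal p.2).attach, cconv p.1 * (cconv q.1.1 * cconv q.1.2))]
  exact Finset.sum_congr rfl fun p _ => Finset.sum_attach (antidiagonal p.2)
    (fun q => cconv p.1 * (cconv q.1 * cconv q.2))

lemma key_bound : ∀ n, 4 ^ n * cconv n ≤ 12 ^ n * catalan n := by
  intro n
  induction n using Nat.strong_induction_on with
  | _ n ih =>
    match n with
    | 0 => simp [cconv]
    | n + 1 =>
      rw [cconv_succ]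
      have step : ∀ p ∈ antidiagonal n, ∀ q ∈ antidiagonal p.2,
          4 ^ n * (cconv p.1 * (cconv q.1 * cconv q.2))
            ≤ 12 ^ n * (catalan p.1 * (catalan q.1 * catalan q.2)) := by
        intro p hp q hq
        have hp' := Finset.HasAntidiagonal.mem_antidiagonal.mp hp
        have hq' := Finset.HasAntidiagonal.mem_antidiagonal.mp hq
        have h1 := ih p.1 (by omega)
        have h2 := ih q.1 (by omega)
        have h3 := ih q.2 (by omega)
        calc 4 ^ n * (cconv p.1 * (cconv q.1 * cconv q.2))
            = (4 ^ p.1 * cconv p.1) * ((4 ^ q.1 * cconv q.1) * (4 ^ q.2 * cconv q.2)) := by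
              rw [show n = p.1 + (q.1 + q.2) by omega]; ring
          _ ≤ (12 ^ p.1 * catalan p.1) * ((12 ^ q.1 * catalan q.1) * (12 ^ q.2 * catalan q.2)) := by
              exact Nat.mul_le_mul h1 (Nat.mul_le_mul h2 h3)
          _ = 12 ^ n * (catalan p.1 * (catalan q.1 * catalan q.2)) := by
              rw [show n = p.1 + (q.1 + q.2) by omega]; ring
      have hsum : 4 ^ n * ∑ p ∈ antidiagonal n, ∑ q ∈ antidiagonal p.2,
            cconv p.1 * (cconv q.1 * cconv q.2)
          ≤ 12 ^ n * ∑ p ∈ antidiagonal n, ∑ q ∈ antidiagonal p.2,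
            catalan p.1 * (catalan q.1 * catalan q.2) := by
        rw [Finset.mul_sum, Finset.mul_sum]
        refine Finset.sum_le_sum fun p hp => ?_
        rw [Finset.mul_sum, Finset.mul_sum]
        exact Finset.sum_le_sum fun q hq => step p hp q hq
      have hcat : ∑ p ∈ antidiagonal n, ∑ q ∈ antidiagonal p.2,
            catalan p.1 * (catalan q.1 * catalan q.2) ≤ 3 * catalan (n + 1) := by
        have : ∀ p ∈ antidiagonal n, ∑ q ∈ antidiagonal p.2,
            catalan p.1 * (catalan q.1 * catalan q.2) = catalan p.1 * catalan (p.2 + 1) := by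
          intro p _
          rw [← Finset.mul_sum, ← catalan_succ']
        rw [Finset.sum_congr rfl this]
        have h4 : catalan (n + 2) ≤ 4 * catalan (n + 1) := catalan_succ_le_four_mul (n + 1)
        have := catalan_conv_ident n
        omega
      calc 4 ^ (n + 1) * ∑ p ∈ antidiagonal n, ∑ q ∈ antidiagonal p.2,
            cconv p.1 * (cconv q.1 * cconv q.2)
          = 4 * (4 ^ n * ∑ p ∈ antidiagonal n, ∑ q ∈ antidiagonal p.2,
            cconv p.1 * (cconv q.1 * cconv q.2)) := by ring
        _ ≤ 4 * (12 ^ n * (3 * catalan (n + 1))) := by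
            refine Nat.mul_le_mul_left 4 (le_trans hsum (Nat.mul_le_mul_left _ hcat))
        _ = 12 ^ (n + 1) * catalan (n + 1) := by ring

lemma cconv_le_twelve_pow (n : ℕ) : cconv n ≤ 12 ^ n := by
  have h := key_bound n
  have h2 : 12 ^ n * catalan n ≤ 4 ^ n * 12 ^ n := by
    calc 12 ^ n * catalan n ≤ 12 ^ n * 4 ^ n := Nat.mul_le_mul_left _ (catalan_le_four_pow n)
      _ = 4 ^ n * 12 ^ n := by ring
  exact Nat.le_of_mul_le_mul_left (le_trans h h2) (Nat.pow_pos (by norm_num))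

/-- **Exponential bound on the ternary Catalan convolution**: `c n ≤ (5 e)^n`. -/
theorem cconv_le_pow (n : ℕ) : (cconv n : ℝ) ≤ (5 * Real.exp 1) ^ n := by
  calc (cconv n : ℝ) ≤ (12 : ℝ) ^ n := by
        exact_mod_cast Nat.cast_le.mpr (cconv_le_twelve_pow n)
    _ ≤ (5 * Real.exp 1) ^ n := by
        refine pow_le_pow_left₀ (by norm_num) ?_ n
        have := Real.exp_one_gt_d9
        nlinarith
end
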